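/- arXiv:math/0612627 — 2 statements merged into one kernel-verified Lean document; each statement's English description precedes it below -/
import Mathlib

section
/- For the probability density function f(x) = k/x on the interval [10^S, 10^(S+G)], where S is a real number, G is a positive integer, and k = 1/(G·ln 10) is the normalizing constant, the probability that a random variable with this density has first significant digit d equals log₁₀(1 + 1/d) for each digit d ∈ {1,...,9}. -/
/-!
Substituting `x = 10 ^ u` turns the density `k / x` into the constant `k * log 10`, and `10 ^ u`
has first digit `d` exactly when the fractional part of `u` lies in `[log₁₀ d, log₁₀ (d + 1))`.
This set is `1`-periodic, so over the `G` whole periods of `[S, S + G]` it has measure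
`G * log₁₀ ((d + 1) / d)`.
-/

open MeasureTheory

/-- `d` is the first significant digit of `x`. -/
def firstDigit (d : ℕ) (x : ℝ) : Prop :=
  ∃ n : ℤ, (d : ℝ) * 10 ^ n ≤ x ∧ x < ((d : ℝ) + 1) * 10 ^ n

open Set Real

theorem volume_real_Icc_inter_fract_preimage {I : Set ℝ} (hI : MeasurableSet I) (t : ℝ) (m : ℕ) :
    volume.real (Icc t (t + m) ∩ Int.fract ⁻¹' I) = m * volume.real (I ∩ Ico 0 1) := by
  have hI' : MeasurableSet (Int.fract ⁻¹' I) := measurable_fract hI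
  set f : ℝ → ℝ := (Int.fract ⁻¹' I).indicator 1
  have hf : Function.Periodic f 1 := (Int.fract_periodic ℝ).comp (I.indicator 1)
  have hf_int (a b : ℝ) : IntervalIntegrable f volume a b :=
    intervalIntegrable_iff.2 <|
      (integrableOn_const (C := (1 : ℝ)) measure_Ioc_lt_top.ne).indicator hI'
  have h_period : ∫ u in (0 : ℝ)..1, f u = volume.real (I ∩ Ico 0 1) := by
    rw [intervalIntegral.integral_of_le zero_le_one, integral_Ioc_eq_integral_Ioo,
      ← integral_Ico_eq_integral_Ioo, ← measureReal_restrict_apply hI,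
      ← integral_indicator_one hI]
    refine setIntegral_congr_fun measurableSet_Ico fun u hu => ?_
    change I.indicator 1 (Int.fract u) = _
    rw [Int.fract_eq_self.2 hu]
  calc volume.real (Icc t (t + m) ∩ Int.fract ⁻¹' I)
      = ∫ u in t..t + (m : ℤ) • (1 : ℝ), f u := by
        rw [intervalIntegral.integral_of_le (by simp), ← integral_Icc_eq_integral_Ioc,
          integral_indicator_one hI', measureReal_restrict_apply hI', inter_comm]
        simp
    _ = m * volume.real (I ∩ Ico 0 1) := by
        rw [hf.intervalIntegral_add_zsmul_eq m t hf_int, hf.intervalIntegral_add_eq t 0, zero_add,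
          h_period, zsmul_eq_mul, Int.cast_natCast]

theorem fract_mem_Ico_iff_exists_int {α β : ℝ} (hα : 0 ≤ α) (hβ : β ≤ 1) (u : ℝ) :
    Int.fract u ∈ Ico α β ↔ ∃ n : ℤ, u ∈ Ico (n + α) (n + β) := by
  constructor
  · rintro ⟨h₁, h₂⟩
    refine ⟨⌊u⌋, ?_, ?_⟩ <;> linarith [Int.self_sub_floor u]
  · rintro ⟨n, h₁, h₂⟩
    have hn : ⌊u⌋ = n := Int.floor_eq_iff.2 ⟨by linarith, by linarith⟩
    rw [← Int.self_sub_floor, hn]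
    constructor <;> linarith

theorem mul_zpow_eq_rpow_add_logb {b y : ℝ} (hb : 0 < b) (hb₁ : b ≠ 1) (hy : 0 < y) (n : ℤ) :
    y * b ^ n = b ^ ((n : ℝ) + logb b y) := by
  rw [rpow_add hb, rpow_intCast, rpow_logb hb hb₁ hy, mul_comm]

theorem logb_digit_nonneg_and_logb_digit_succ_le_one {d : ℕ} (hd₁ : 1 ≤ d) (hd₉ : d ≤ 9) :
    0 ≤ logb 10 d ∧ logb 10 (d + 1) ≤ 1 := by
  have hd' : (d : ℝ) + 1 ≤ 10 := by exact_mod_cast Nat.succ_le_succ hd₉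
  refine ⟨logb_nonneg (by norm_num) (by exact_mod_cast hd₁), ?_⟩
  exact (logb_le_logb_of_le (by norm_num) (by positivity) hd').trans_eq
    (logb_self_eq_one (by norm_num))

theorem firstDigit_rpow_iff {d : ℕ} (hd₁ : 1 ≤ d) (hd₉ : d ≤ 9) (u : ℝ) :
    firstDigit d (10 ^ u) ↔ Int.fract u ∈ Ico (logb 10 d) (logb 10 (d + 1)) := by
  obtain ⟨hα, hβ⟩ := logb_digit_nonneg_and_logb_digit_succ_le_one hd₁ hd₉
  have hd : (0 : ℝ) < d := by exact_mod_cast hd₁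
  rw [firstDigit, fract_mem_Ico_iff_exists_int hα hβ]
  refine exists_congr fun n => ?_
  rw [mul_zpow_eq_rpow_add_logb (by norm_num) (by norm_num) hd,
    mul_zpow_eq_rpow_add_logb (by norm_num) (by norm_num) (by positivity),
    rpow_le_rpow_left_iff (by norm_num), rpow_lt_rpow_left_iff (by norm_num), mem_Ico]

theorem Icc_rpow_inter_eq_image {b : ℝ} (hb : 1 < b) (a c : ℝ) (s : Set ℝ) :
    Icc (b ^ a) (b ^ c) ∩ s = (b ^ ·) '' (Icc a c ∩ (b ^ ·) ⁻¹' s) := by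
  ext x
  constructor
  · rintro ⟨⟨h₁, h₂⟩, hs⟩
    have hx : 0 < x := (rpow_pos_of_pos (by linarith) a).trans_le h₁
    have hx_eq : b ^ logb b x = x := rpow_logb (by linarith) hb.ne' hx
    refine ⟨logb b x, ⟨⟨(le_logb_iff_rpow_le hb hx).2 h₁, (logb_le_iff_le_rpow hb hx).2 h₂⟩, ?_⟩,
      hx_eq⟩
    rwa [mem_preimage, hx_eq]
  · rintro ⟨u, ⟨⟨h₁, h₂⟩, hs⟩, rfl⟩
    exact ⟨⟨rpow_le_rpow_of_exponent_le hb.le h₁, rpow_le_rpow_of_exponent_le hb.le h₂⟩, hs⟩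

theorem setIntegral_image_rpow_div {b : ℝ} (hb : 1 < b) {s : Set ℝ} (hs : MeasurableSet s)
    (c : ℝ) : ∫ x in (b ^ ·) '' s, c / x = c * log b * volume.real s := by
  have hb₀ : 0 < b := by linarith
  rw [integral_image_eq_integral_abs_deriv_smul hs
    (fun u _ => (hasStrictDerivAt_const_rpow hb₀ u).hasDerivAt.hasDerivWithinAt)
    (strictMono_rpow_of_base_gt_one hb).injective.injOn]
  have h_jacobian (u : ℝ) : |b ^ u * log b| • (c / b ^ u) = c * log b := by
    have hbu := rpow_pos_of_pos hb₀ u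
    rw [abs_of_pos (mul_pos hbu (log_pos hb)), smul_eq_mul]
    field_simp
  simp only [h_jacobian, setIntegral_const, smul_eq_mul, mul_comm]

theorem stmt0 (S : ℝ) (G : ℕ) (hG : 1 ≤ G) (k : ℝ)
    (hk : k = 1 / ((G : ℝ) * Real.log 10))
    (d : ℕ) (hd : d ∈ Finset.Icc 1 9) :
    (∫ x in {x : ℝ | x ∈ Set.Icc ((10:ℝ) ^ S) ((10:ℝ) ^ (S + G)) ∧ firstDigit d x}, k / x)
      = Real.logb 10 (1 + 1 / (d : ℝ)) := by
  obtain ⟨hd₁, hd₉⟩ := Finset.mem_Icc.1 hd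
  obtain ⟨hα, hβ⟩ := logb_digit_nonneg_and_logb_digit_succ_le_one hd₁ hd₉
  have hd₀ : (0 : ℝ) < d := by exact_mod_cast hd₁
  have hdigit :
      Int.fract ⁻¹' Ico (logb 10 d) (logb 10 (d + 1)) = (10 ^ ·) ⁻¹' {x | firstDigit d x} :=
    ext fun u => (firstDigit_rpow_iff hd₁ hd₉ u).symm
  have hset : {x : ℝ | x ∈ Icc ((10:ℝ) ^ S) ((10:ℝ) ^ (S + G)) ∧ firstDigit d x}
      = (10 ^ ·) '' (Icc S (S + G) ∩ Int.fract ⁻¹' Ico (logb 10 d) (logb 10 (d + 1))) := by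
    rw [hdigit, ← Icc_rpow_inter_eq_image (by norm_num)]
    rfl
  rw [hset, setIntegral_image_rpow_div (by norm_num) (measurableSet_Icc.inter
      (measurable_fract measurableSet_Ico)), volume_real_Icc_inter_fract_preimage measurableSet_Ico,
    inter_eq_left.2 (Ico_subset_Ico hα hβ), volume_real_Ico_of_le
      (logb_le_logb_of_le (by norm_num) hd₀ (by linarith)),
    ← logb_div (by positivity) hd₀.ne', hk]
  have hG₀ : (G : ℝ) ≠ 0 := by positivity
  field_simp
end

section
/- Let X and Y be independent random variables each uniformly distributed on (0,1). Then for each digit d ∈ {1,...,9}, the probability that the first significant digit of X/Y equals d is (1/18)·[1 + 10/(d(d+1))]. -/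
/-!
The event splits over the decade `n ∈ ℤ` as `d·10ⁿ ≤ X/Y < (d+1)·10ⁿ`. In the unit square the
region `a ≤ x/y < b` is a triangle of area `(b - a)/2` when `b ≤ 1` and `(1/a - 1/b)/2` when
`1 ≤ a`; since `1 ≤ d ≤ 9`, every decade is in one of these two cases. Summing the two resulting
geometric series gives `(1/d - 1/(d+1))/2 · 10/9 + 1/20 · 10/9`.
-/

open MeasureTheory

open Set

local notation "volUnitSq" =>
  Measure.prod (Measure.restrict volume (Ioo (0 : ℝ) 1)) (Measure.restrict volume (Ioo (0 : ℝ) 1))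

lemma setLIntegral_Ioo_zero_one_ofReal_const_mul {c : ℝ} (hc : 0 ≤ c) :
    ∫⁻ t in Ioo (0 : ℝ) 1, ENNReal.ofReal (c * t) = ENNReal.ofReal (c / 2) := by
  have hint : IntegrableOn (fun t : ℝ => c * t) (Ioo 0 1) :=
    (continuous_const_mul c).integrableOn_Icc.mono_set Ioo_subset_Icc_self
  have hnonneg : 0 ≤ᵐ[volume.restrict (Ioo (0 : ℝ) 1)] fun t => c * t :=
    (ae_restrict_iff' measurableSet_Ioo).2 (.of_forall fun t ht => mul_nonneg hc ht.1.le)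
  rw [← ofReal_integral_eq_lintegral_ofReal hint hnonneg, ← integral_Ioc_eq_integral_Ioo,
    ← intervalIntegral.integral_of_le zero_le_one, intervalIntegral.integral_const_mul,
    integral_id]
  norm_num [div_eq_mul_inv]

lemma tsum_ofReal_mul_geometric {c r : ℝ} (hc : 0 ≤ c) (hr₀ : 0 ≤ r) (hr₁ : r < 1) :
    ∑' n : ℕ, ENNReal.ofReal (c * r ^ n) = ENNReal.ofReal (c * (1 - r)⁻¹) := by
  rw [← ENNReal.ofReal_tsum_of_nonneg (fun n => by positivity)
    ((summable_geometric_of_lt_one hr₀ hr₁).mul_left c), tsum_mul_left,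
    tsum_geometric_of_lt_one hr₀ hr₁]

lemma measure_unitSquare_div_mem_Ico_of_le_one {a b : ℝ} (ha : 0 < a) (hab : a ≤ b)
    (hb : b ≤ 1) :
    volUnitSq {p : ℝ × ℝ | p.1 / p.2 ∈ Ico a b} = ENNReal.ofReal ((b - a) / 2) := by
  have hmeas : MeasurableSet {p : ℝ × ℝ | p.1 / p.2 ∈ Ico a b} :=
    (measurable_fst.div measurable_snd) measurableSet_Ico
  have hslice : EqOn (fun y => volume.restrict (Ioo (0 : ℝ) 1)
      ((fun x => (x, y)) ⁻¹' {p : ℝ × ℝ | p.1 / p.2 ∈ Ico a b}))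
      (fun y => ENNReal.ofReal ((b - a) * y)) (Ioo 0 1) := by
    rintro y ⟨hy₀, hy₁⟩
    have hsection : {x : ℝ | x / y ∈ Ico a b} ∩ Ioo 0 1 = Ico (a * y) (b * y) := by
      ext x
      simp only [mem_inter_iff, mem_ofPred_eq, mem_Ico, mem_Ioo, le_div_iff₀ hy₀,
        div_lt_iff₀ hy₀]
      constructor
      · rintro ⟨h, -⟩
        exact h
      · rintro ⟨hax, hxb⟩
        exact ⟨⟨hax, hxb⟩, (mul_pos ha hy₀).trans_le hax, by nlinarith⟩
    have hm : MeasurableSet {x : ℝ | x / y ∈ Ico a b} :=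
      measurableSet_Ico.preimage (measurable_id.div_const y)
    change volume.restrict _ {x : ℝ | x / y ∈ Ico a b} = _
    rw [Measure.restrict_apply hm, hsection, Real.volume_Ico, ← sub_mul]
  rw [Measure.prod_apply_symm hmeas, setLIntegral_congr_fun measurableSet_Ioo hslice,
    setLIntegral_Ioo_zero_one_ofReal_const_mul (sub_nonneg.2 hab)]

lemma measure_unitSquare_div_mem_Ico_of_one_le {a b : ℝ} (ha : 1 ≤ a) (hab : a ≤ b) :
    volUnitSq {p : ℝ × ℝ | p.1 / p.2 ∈ Ico a b} = ENNReal.ofReal ((a⁻¹ - b⁻¹) / 2) := by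
  have ha₀ : 0 < a := one_pos.trans_le ha
  have hb₀ : 0 < b := ha₀.trans_le hab
  have hmeas : MeasurableSet {p : ℝ × ℝ | p.1 / p.2 ∈ Ico a b} :=
    (measurable_fst.div measurable_snd) measurableSet_Ico
  have hslice : EqOn (fun x => volume.restrict (Ioo (0 : ℝ) 1)
      (Prod.mk x ⁻¹' {p : ℝ × ℝ | p.1 / p.2 ∈ Ico a b}))
      (fun x => ENNReal.ofReal ((a⁻¹ - b⁻¹) * x)) (Ioo 0 1) := by
    rintro x ⟨hx₀, hx₁⟩
    have hsection : {y : ℝ | x / y ∈ Ico a b} ∩ Ioo 0 1 = Ioc (x / b) (x / a) := by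
      ext y
      simp only [mem_inter_iff, mem_ofPred_eq, mem_Ico, mem_Ioo, mem_Ioc]
      constructor
      · rintro ⟨⟨hay, hyb⟩, hy₀, -⟩
        rw [le_div_iff₀ hy₀] at hay
        rw [div_lt_iff₀ hy₀] at hyb
        rw [div_lt_iff₀ hb₀, le_div_iff₀ ha₀]
        exact ⟨by linarith, by linarith⟩
      · rintro ⟨hby, hya⟩
        have hy₀ : 0 < y := (div_pos hx₀ hb₀).trans hby
        have hy₁ : y < 1 := (hya.trans (div_le_self hx₀.le ha)).trans_lt hx₁
        rw [div_lt_iff₀ hb₀] at hby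
        rw [le_div_iff₀ ha₀] at hya
        rw [le_div_iff₀ hy₀, div_lt_iff₀ hy₀]
        exact ⟨⟨by linarith, by linarith⟩, hy₀, hy₁⟩
    have hm : MeasurableSet {y : ℝ | x / y ∈ Ico a b} :=
      measurableSet_Ico.preimage (measurable_const.div measurable_id)
    change volume.restrict _ {y : ℝ | x / y ∈ Ico a b} = _
    rw [Measure.restrict_apply hm, hsection, Real.volume_Ioc]
    congr 1
    ring
  rw [Measure.prod_apply hmeas, setLIntegral_congr_fun measurableSet_Ioo hslice,
    setLIntegral_Ioo_zero_one_ofReal_const_mul (sub_nonneg.2 (inv_anti₀ ha₀ hab))]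

lemma pairwise_disjoint_Ico_mul_zpow_ten {a b : ℝ} (ha : 0 ≤ a) (hb : b ≤ 10 * a) :
    Pairwise (Function.onFun Disjoint fun n : ℤ => Ico (a * 10 ^ n) (b * 10 ^ n)) := by
  refine (pairwise_disjoint_on _).2 fun m n hmn => ?_
  have hpow : (10 : ℝ) ^ m * 10 ≤ 10 ^ n := by
    rw [← zpow_add_one₀ (by norm_num)]
    exact zpow_le_zpow_right₀ (by norm_num) hmn
  have hgap : b * 10 ^ m ≤ a * 10 ^ n := calc
    b * 10 ^ m ≤ 10 * a * 10 ^ m := by gcongr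
    _ = a * (10 ^ m * 10) := by ring
    _ ≤ a * 10 ^ n := by gcongr
  exact Ico_disjoint_Ico.2 ((min_le_left _ _).trans (hgap.trans (le_max_right _ _)))

lemma measure_unitSquare_firstDigit_eq_tsum (d : ℕ) (hd : 1 ≤ d) :
    volUnitSq {p : ℝ × ℝ | firstDigit d (p.1 / p.2)} =
      ∑' n : ℤ, volUnitSq
        {p : ℝ × ℝ | p.1 / p.2 ∈ Ico ((d : ℝ) * 10 ^ n) (((d : ℝ) + 1) * 10 ^ n)} := by
  have hdecades : {p : ℝ × ℝ | firstDigit d (p.1 / p.2)} =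
      ⋃ n : ℤ, {p : ℝ × ℝ | p.1 / p.2 ∈ Ico ((d : ℝ) * 10 ^ n) (((d : ℝ) + 1) * 10 ^ n)} := by
    ext p
    simp [firstDigit]
  have hD : (1 : ℝ) ≤ d := by exact_mod_cast hd
  have hdisjoint : Pairwise (Function.onFun Disjoint fun n : ℤ =>
      {p : ℝ × ℝ | p.1 / p.2 ∈ Ico ((d : ℝ) * 10 ^ n) (((d : ℝ) + 1) * 10 ^ n)}) :=
    fun m n hmn => (pairwise_disjoint_Ico_mul_zpow_ten (by positivity) (by linarith) hmn).preimage
      fun p : ℝ × ℝ => p.1 / p.2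
  rw [hdecades, measure_iUnion hdisjoint
    fun n => (measurable_fst.div measurable_snd) measurableSet_Ico]

lemma measure_unitSquare_decade_natCast {a : ℝ} (ha : 1 ≤ a) (n : ℕ) :
    volUnitSq {p : ℝ × ℝ | p.1 / p.2 ∈ Ico (a * 10 ^ (n : ℤ)) ((a + 1) * 10 ^ (n : ℤ))} =
      ENNReal.ofReal ((2 * a * (a + 1))⁻¹ * 10⁻¹ ^ n) := by
  have hone_le : (1 : ℝ) ≤ 10 ^ (n : ℤ) := one_le_zpow₀ (by norm_num) (Int.natCast_nonneg n)
  rw [measure_unitSquare_div_mem_Ico_of_one_le (one_le_mul_of_one_le_of_one_le ha hone_le)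
    (mul_le_mul_of_nonneg_right (by linarith) (by positivity))]
  congr 1
  rw [zpow_natCast, inv_pow]
  field_simp
  ring

lemma measure_unitSquare_decade_negSucc {a : ℝ} (ha₀ : 0 < a) (ha₉ : a ≤ 9) (n : ℕ) :
    volUnitSq {p : ℝ × ℝ | p.1 / p.2 ∈
        Ico (a * 10 ^ (-((n : ℤ) + 1))) ((a + 1) * 10 ^ (-((n : ℤ) + 1)))} =
      ENNReal.ofReal (20⁻¹ * 10⁻¹ ^ n) := by
  have hle_one : (a + 1) * 10 ^ (-((n : ℤ) + 1)) ≤ 1 := calc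
    (a + 1) * 10 ^ (-((n : ℤ) + 1)) ≤ 10 * 10 ^ (-1 : ℤ) := by
      gcongr
      · linarith
      · norm_num
      · omega
    _ = 1 := by norm_num
  rw [measure_unitSquare_div_mem_Ico_of_le_one (by positivity)
    (mul_le_mul_of_nonneg_right (by linarith) (by positivity)) hle_one]
  congr 1
  rw [← sub_mul, add_sub_cancel_left, one_mul, zpow_neg, ← Nat.cast_succ, zpow_natCast,
    pow_succ', inv_pow]
  ring

theorem stmt8 (d : ℕ) (hd : d ∈ Finset.Icc 1 9) :
    (((volume : Measure ℝ).restrict (Set.Ioo 0 1)).prod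
        ((volume : Measure ℝ).restrict (Set.Ioo 0 1)))
      {p : ℝ × ℝ | firstDigit d (p.1 / p.2)}
      = ENNReal.ofReal ((1/18) * (1 + 10 / ((d : ℝ) * ((d : ℝ) + 1)))) := by
  obtain ⟨hd₁, hd₉⟩ := Finset.mem_Icc.1 hd
  have hD₁ : (1 : ℝ) ≤ d := by exact_mod_cast hd₁
  have hD₉ : (d : ℝ) ≤ 9 := by exact_mod_cast hd₉
  rw [measure_unitSquare_firstDigit_eq_tsum d hd₁,
    tsum_of_nat_of_neg_add_one ENNReal.summable ENNReal.summable,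
    tsum_congr (measure_unitSquare_decade_natCast hD₁),
    tsum_congr (measure_unitSquare_decade_negSucc (by positivity) hD₉),
    tsum_ofReal_mul_geometric (by positivity) (by norm_num) (by norm_num),
    tsum_ofReal_mul_geometric (by norm_num) (by norm_num) (by norm_num),
    ← ENNReal.ofReal_add (by positivity) (by positivity)]
  congr 1
  field_simp
  ring
end
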